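/- arXiv:1604.08713 — 3 statements merged into one kernel-verified Lean document; each statement's English description precedes it below -/
import Mathlib

section
/- Let d ∈ ℕ and 1 ≤ p,q < ∞. There exists a constant c > 0 depending only on p, q, d such that for every infinite sequence S in [0,1)^d one has (∑_{j∈ℕ_{−1}^d} 2^{|j|(1−1/p)q} (∑_{m∈𝔻_j} |⟨D_S^N, h_{j,m}⟩|^p)^{q/p})^{1/q} ≥ c · N^{−1} (log N)^{d/q} for infinitely many N ∈ ℕ. -/
open MeasureTheory
open scoped ENNReal

noncomputable section

/-- The closed unit cube `[0,1]^d`. -/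
def unitCube (d : ℕ) : Set (Fin d → ℝ) := Set.univ.pi fun _ => Set.Icc (0:ℝ) 1

/-- The half-open unit cube `[0,1)^d`. -/
def unitCubeIco (d : ℕ) : Set (Fin d → ℝ) := Set.univ.pi fun _ => Set.Ico (0:ℝ) 1

/-- Discrepancy function of the first `N` points of the sequence `S` in `[0,1)^d`. -/
def discSeq (d : ℕ) (S : ℕ → Fin d → ℝ) (N : ℕ) (x : Fin d → ℝ) : ℝ :=
  (Nat.card {k : Fin N // ∀ i, S k i < x i} : ℝ) / N - ∏ i, x i

/-- One-dimensional Haar function `h_{j,m}`, with `h_{-1,0} = 1_{[0,1)}`. -/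
def haar1 (j : ℤ) (m : ℕ) (x : ℝ) : ℝ :=
  if j = -1 then (if 0 ≤ x ∧ x < 1 then 1 else 0)
  else if (m:ℝ)/2^j.toNat ≤ x ∧ x < ((m:ℝ) + 1/2)/2^j.toNat then 1
  else if ((m:ℝ) + 1/2)/2^j.toNat ≤ x ∧ x < ((m:ℝ)+1)/2^j.toNat then -1
  else 0

/-- `d`-dimensional (tensor product) Haar function. -/
def haarFn (d : ℕ) (j : Fin d → ℤ) (m : Fin d → ℕ) (x : Fin d → ℝ) : ℝ :=
  ∏ i, haar1 (j i) (m i) (x i)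

/-- Haar coefficient `⟨f, h_{j,m}⟩`. -/
def haarCoeff (d : ℕ) (f : (Fin d → ℝ) → ℝ) (j : Fin d → ℤ) (m : Fin d → ℕ) : ℝ :=
  ∫ x in unitCube d, f x * haarFn d j m x

/-- `|j| = max(j₁,0) + ⋯ + max(j_d,0)`. -/
def jnorm (d : ℕ) (j : Fin d → ℤ) : ℕ := ∑ i, (j i).toNat

/-- One-dimensional dyadic interval `I_{j,m}`. -/
def dyadicI (j : ℤ) (m : ℕ) : Set ℝ :=
  Set.Ico ((m:ℝ)/2^j.toNat) (((m:ℝ)+1)/2^j.toNat)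

/-- `d`-dimensional dyadic box `I_{j,m}`. -/
def dyadicBox (d : ℕ) (j : Fin d → ℤ) (m : Fin d → ℕ) : Set (Fin d → ℝ) :=
  Set.univ.pi fun i => dyadicI (j i) (m i)

/-- The index set `𝔻_j` as a finset. -/
def Dfin (d : ℕ) (j : Fin d → ℤ) : Finset (Fin d → ℕ) :=
  Fintype.piFinset fun i => Finset.range (2 ^ (j i).toNat)

/-- The index set `𝔻_j` for `j ∈ ℕ₀^d`. -/
def Dfin0 (d : ℕ) (j : Fin d → ℕ) : Finset (Fin d → ℕ) :=
  Fintype.piFinset fun i => Finset.range (2 ^ (j i))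

/-- Coordinate of the `k`-th point of a digital sequence over `𝔽₂` with generating
matrix `C` (`0`-based rows and columns). -/
def digitalCoord (C : ℕ → ℕ → ZMod 2) (k : ℕ) : ℝ :=
  ∑' i : ℕ,
    (((∑ ℓ ∈ Finset.range (k+1), C i ℓ * (if k.testBit ℓ then 1 else 0)).val : ℕ) : ℝ) / 2 ^ (i + 1)

/-- The digital sequence over `𝔽₂` generated by matrices `C 0, …, C (d-1)`. -/
def digitalSeq (d : ℕ) (C : Fin d → ℕ → ℕ → ZMod 2) : ℕ → Fin d → ℝ :=
  fun k j => digitalCoord (C j) k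

/-- `C 0, …, C (d-1)` generate an order `α` digital `(t,n,d)`-net over `𝔽₂`,
where the relevant submatrices have `q` rows (`q ≥ αn`) and `n` columns.
Row indices are `0`-based; the `1`-based row value of row `r` is `r+1`. -/
def IsOrderNet (α n t q d : ℕ) (C : Fin d → ℕ → ℕ → ZMod 2) : Prop :=
  ∀ (ν : Fin d → ℕ) (r : ∀ j : Fin d, Fin (ν j) → ℕ),
    (∀ j, StrictAnti (r j)) →
    (∀ j l, r j l < q) →
    (∑ j, ∑ l ∈ Finset.univ.filter (fun l : Fin (ν j) => (l:ℕ) < α), (r j l + 1)) ≤ α * n - t →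
    LinearIndependent (ZMod 2)
      (fun p : Σ j : Fin d, Fin (ν j) => fun col : Fin n => C p.1 (r p.1 p.2) col)

/-- `C 0, …, C (d-1)` generate an order `α` digital `(t,d)`-sequence over `𝔽₂`. -/
def IsOrderSeq (α t d : ℕ) (C : Fin d → ℕ → ℕ → ZMod 2) : Prop :=
  ∀ n : ℕ, t < α * n → IsOrderNet α n t (α * n) d C

/-- The condition `e_{i,k,ℓ} = 0` for all `k > 2ℓ` (in `1`-based indexing). -/
def Triangular2 (d : ℕ) (E : Fin d → ℕ → ℕ → ZMod 2) : Prop :=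
  ∀ i k ℓ, 2 * (ℓ + 1) < k + 1 → E i k ℓ = 0

open scoped Classical in
/-- The quantity `λ(U)⁻¹ ∑_{j ∈ ℕ₀^d} 2^{|j|} ∑_{m : I_{j,m} ⊆ U} ⟨f,h_{j,m}⟩²`. -/
def bmoSq (d : ℕ) (f : (Fin d → ℝ) → ℝ) (U : Set (Fin d → ℝ)) : ℝ≥0∞ :=
  (volume U)⁻¹ * ∑' j : Fin d → ℕ, ∑ m ∈ Dfin0 d j,
    if dyadicBox d (fun i => (j i : ℤ)) m ⊆ U then
      (2:ℝ≥0∞) ^ (∑ i, j i) * ENNReal.ofReal ((haarCoeff d f (fun i => (j i : ℤ)) m)^2)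
    else 0

/-- The BMO (semi-)norm `‖f | bmo^d‖`. -/
def bmoNorm (d : ℕ) (f : (Fin d → ℝ) → ℝ) : ℝ≥0∞ :=
  (⨆ U : {U : Set (Fin d → ℝ) // MeasurableSet U ∧ U ⊆ unitCubeIco d ∧ 0 < volume U},
    bmoSq d f U.1) ^ (1/2 : ℝ)

/-- The Orlicz norm of `f` on `[0,1)^d` with respect to the Young function `ψ`,
with the convention `inf ∅ = ∞`. -/
def orliczNorm (d : ℕ) (ψ : ℝ → ℝ) (f : (Fin d → ℝ) → ℝ) : ℝ≥0∞ :=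
  ⨅ K : {K : ℝ // 0 < K ∧ ∫ x in unitCubeIco d, ψ (|f x| / K) ≤ 1}, ENNReal.ofReal K.1

/-- `ψ` is a Young function which coincides with `exp(x^β) - 1` for all large `x`. -/
def IsYoungExp (β : ℝ) (ψ : ℝ → ℝ) : Prop :=
  ConvexOn ℝ (Set.Ici 0) ψ ∧ ψ 0 = 0 ∧ (∀ x : ℝ, 0 < x → 0 < ψ x) ∧
    ∃ x₀ : ℝ, ∀ x ≥ x₀, ψ x = Real.exp (x ^ β) - 1

/-- The set of valid Haar indices `j ∈ ℕ_{-1}^d`. -/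
def validJ (d : ℕ) : Set (Fin d → ℤ) := {j | ∀ i, -1 ≤ j i}

/-- The `q`-th power of the Haar-characterization of the `S^s_{p,q}B` norm:
`∑_{j ∈ ℕ_{-1}^d} 2^{|j|(s-1/p+1)q} (∑_{m ∈ 𝔻_j} |⟨f,h_{j,m}⟩|^p)^{q/p}`. -/
def besovSum (d : ℕ) (p q s : ℝ) (f : (Fin d → ℝ) → ℝ) : ℝ≥0∞ :=
  ∑' j : validJ d,
    ENNReal.ofReal ((2:ℝ) ^ ((jnorm d j.1 : ℝ) * (s - 1/p + 1) * q) *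
      (∑ m ∈ Dfin d j.1, |haarCoeff d f j.1 m| ^ p) ^ (q / p))

/-- Coordinate of the `k`-th point of a digital net with `q × n` generating matrix `C`. -/
def netCoord (q n : ℕ) (C : ℕ → ℕ → ZMod 2) (k : ℕ) : ℝ :=
  ∑ i ∈ Finset.range q,
    ((∑ ℓ ∈ Finset.range n, C i ℓ * (if k.testBit ℓ then 1 else 0)).val : ℝ) / 2 ^ (i + 1)

/-- `n_{μ+1}`, with the convention `n_{r+1} = log₂ N` (indices `1`-based, `n` stored `0`-based). -/
def nExt (r : ℕ) (n : Fin r → ℕ) (N : ℕ) (μ : ℕ) : ℝ :=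
  if h : μ < r then (n ⟨μ, h⟩ : ℝ) else Real.logb 2 N

/-- `n_μ`, with the convention `n_0 = 0` (indices `1`-based, `n` stored `0`-based). -/
def nPrev (r : ℕ) (n : Fin r → ℕ) (μ : ℕ) : ℝ :=
  if h : 1 ≤ μ ∧ μ ≤ r then (n ⟨μ - 1, by omega⟩ : ℝ) else 0

/-- The dyadic square function `Sf`, valued in `ℝ≥0∞`. -/
def sqFnE (d : ℕ) (f : (Fin d → ℝ) → ℝ) (x : Fin d → ℝ) : ℝ≥0∞ :=
  (∑' j : validJ d, ∑ m ∈ Dfin d j.1,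
    ENNReal.ofReal ((2:ℝ) ^ (2 * jnorm d j.1) * (haarCoeff d f j.1 m)^2 *
      (dyadicBox d j.1 m).indicator (fun _ => (1:ℝ)) x)) ^ (1/2 : ℝ)

/-- `sup_{p > 1} p^{-1/β} ‖f‖_{L_p([0,1]^d)}`. -/
def supLp (d : ℕ) (β : ℝ) (f : (Fin d → ℝ) → ℝ) : ℝ≥0∞ :=
  ⨆ p : {p : ℝ // 1 < p},
    ENNReal.ofReal ((p:ℝ) ^ (-(1/β))) * eLpNorm f (ENNReal.ofReal (p:ℝ)) (volume.restrict (unitCube d))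

/-- `‖f | 𝒟₀^d‖² = ∑_{j ∈ ℕ₀^d} 2^{|j|} ∑_{m ∈ 𝔻_j} ⟨f,h_{j,m}⟩²`. -/
def dNormSq (d : ℕ) (f : (Fin d → ℝ) → ℝ) : ℝ≥0∞ :=
  ∑' j : Fin d → ℕ, ∑ m ∈ Dfin0 d j,
    ENNReal.ofReal ((2:ℝ) ^ (∑ i, j i) * (haarCoeff d f (fun i => (j i : ℤ)) m)^2)

/-- `‖f | 𝒟₀^d‖`. -/
def dNorm (d : ℕ) (f : (Fin d → ℝ) → ℝ) : ℝ≥0∞ := (dNormSq d f) ^ (1/2 : ℝ)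

/-!
Split the discrepancy of the first `k` points into one-point terms:
`k ⟨D^k, h_{j,m}⟩ = ∑_{l<k} αₗ - k ∏ᵢ ∫ x h_{jᵢ,mᵢ}(x) dx`, where `αₗ` vanishes unless the
`l`-th point lies in the box `I_{j,m}`. On a block of `2^{|j|-1}` consecutive times during which
`I_{j,m}` stays empty, `k ↦ k ⟨D^k, h_{j,m}⟩` is therefore affine with slope of size `4^{-|j|-d}`,
and an alternating sum over the block gives `∑ k |⟨D^k, h_{j,m}⟩| ≳ 4^{-d}`. Below time `2^μ`
there are `2^{μ+1}` pairs (block, box) but only `2^μ` points, so half of the pairs are empty;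
with `r = min p q` this gives `∑_{k ≤ 2^μ} k^r E_k(j) ≳ 2^μ` for every level `|j| ≤ μ + 1`, where
`E_k(j)` is the level-`j` term of the `S⁰_{r,r}B` sum of `D^k`. Summing over the `≈ μ^d` levels
with `2 ≤ jᵢ ≤ μ/d` and discarding the first few `k` (where `E_k(j) ≤ 2^r`), the pigeonhole
principle gives arbitrarily large `k ≤ 2^μ` with `∑_j E_k(j) ≳ μ^d k^{-r}`. Hölder (`r ≤ p`) and
Jensen (`r ≤ q`) turn this into the `S⁰_{p,q}B` bound, and `log k ≤ μ`.
-/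

section Haar1

open Set

variable {j m : ℕ}

lemma dyadicI_natCast (j m : ℕ) : dyadicI j m = Ico ((m:ℝ) / 2^j) ((m + 1) / 2^j) := by
  simp [dyadicI]

lemma dyadicI_subset_Icc (hm : m < 2^j) : dyadicI j m ⊆ Icc 0 1 := by
  have hm' : (m:ℝ) + 1 ≤ 2^j := by exact_mod_cast hm
  rw [dyadicI_natCast]
  refine Ico_subset_Icc_self.trans (Icc_subset_Icc (by positivity) ?_)
  rwa [div_le_one (by positivity)]

lemma dyadicI_succ_subset {n : ℕ} (hn : 2*m ≤ n) (hn' : n ≤ 2*m+1) :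
    dyadicI (j+1 : ℕ) n ⊆ dyadicI j m := by
  have hn : (2*m : ℝ) ≤ n := by exact_mod_cast hn
  have hn' : (n : ℝ) ≤ 2*m+1 := by exact_mod_cast hn'
  intro x hx
  rw [dyadicI_natCast, mem_Ico] at hx ⊢
  rw [pow_succ', ← div_div, ← div_div] at hx
  constructor
  · calc (m:ℝ)/2^j ≤ n/2/2^j := by gcongr; linarith
      _ ≤ x := hx.1
  · calc x < (n+1)/2/2^j := hx.2
      _ ≤ (m+1)/2^j := by gcongr; linarith

lemma measurableSet_dyadicI (j : ℤ) (m : ℕ) : MeasurableSet (dyadicI j m) := measurableSet_Ico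

lemma volume_dyadicI_ne_top (j : ℤ) (m : ℕ) : volume (dyadicI j m) ≠ ⊤ := measure_Ico_lt_top.ne

lemma measureReal_dyadicI (j m : ℕ) : volume.real (dyadicI j m) = (2⁻¹ : ℝ)^j := by
  rw [dyadicI_natCast, Real.volume_real_Ico_of_le (by gcongr; linarith), inv_pow]
  field_simp
  ring

lemma haar1_eq_indicator_sub (j m : ℕ) (x : ℝ) :
    haar1 j m x = (dyadicI (j+1 : ℕ) (2*m)).indicator 1 x
      - (dyadicI (j+1 : ℕ) (2*m+1)).indicator 1 x := by
  have e1 : ((2*m : ℕ) : ℝ) / 2^(j+1) = m / 2^j := by push_cast; field_simp; ring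
  have e2 : ((2*m : ℕ) + 1 : ℝ) / 2^(j+1) = (m + 1/2) / 2^j := by push_cast; field_simp; ring
  have e3 : ((2*m+1 : ℕ) : ℝ) / 2^(j+1) = (m + 1/2) / 2^j := by push_cast; field_simp; ring
  have e4 : ((2*m+1 : ℕ) + 1 : ℝ) / 2^(j+1) = (m + 1) / 2^j := by push_cast; field_simp; ring
  have hj : (j : ℤ) ≠ -1 := by omega
  simp only [haar1, dyadicI_natCast, e1, e2, e3, e4, indicator_apply, mem_Ico, Pi.one_apply,
    Int.toNat_natCast, hj, if_false]
  split_ifs with hL hR hR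
  · linarith [hL.2, hR.1]
  all_goals norm_num

lemma abs_haar1_le_one (j : ℤ) (m : ℕ) (x : ℝ) : |haar1 j m x| ≤ 1 := by
  unfold haar1
  split_ifs <;> norm_num

lemma measurable_haar1 (j m : ℕ) : Measurable (haar1 j m) := by
  rw [funext (haar1_eq_indicator_sub j m)]
  exact (measurable_const.indicator (measurableSet_dyadicI _ _)).sub
    (measurable_const.indicator (measurableSet_dyadicI _ _))

lemma integrableOn_mul_haar1 {φ : ℝ → ℝ} {s : Set ℝ} (hφ : IntegrableOn φ s) (j m : ℕ) :
    IntegrableOn (fun x => φ x * haar1 j m x) s :=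
  Integrable.mul_bdd hφ (measurable_haar1 j m).aestronglyMeasurable
    (ae_of_all _ fun x => by simpa only [Real.norm_eq_abs] using abs_haar1_le_one j m x)

lemma setIntegral_mul_haar1 (hm : m < 2^j) {φ : ℝ → ℝ} (hφ : IntegrableOn φ (Icc 0 1)) :
    ∫ x in Icc (0:ℝ) 1, φ x * haar1 j m x
      = (∫ x in dyadicI (j+1 : ℕ) (2*m), φ x) - ∫ x in dyadicI (j+1 : ℕ) (2*m+1), φ x := by
  have hL : dyadicI (j+1 : ℕ) (2*m) ⊆ Icc 0 1 := dyadicI_subset_Icc (by rw [pow_succ]; omega)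
  have hR : dyadicI (j+1 : ℕ) (2*m+1) ⊆ Icc 0 1 := dyadicI_subset_Icc (by rw [pow_succ]; omega)
  have hsplit : ∀ x, φ x * haar1 j m x = (dyadicI (j+1 : ℕ) (2*m)).indicator φ x
      - (dyadicI (j+1 : ℕ) (2*m+1)).indicator φ x := by
    simp [haar1_eq_indicator_sub, mul_sub, ← indicator_mul_right]
  simp_rw [hsplit]
  have hmeas := measurableSet_dyadicI (j+1 : ℕ)
  rw [integral_sub (hφ.indicator (hmeas _)) (hφ.indicator (hmeas _)),
    setIntegral_indicator (hmeas _), setIntegral_indicator (hmeas _),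
    inter_eq_self_of_subset_right hL, inter_eq_self_of_subset_right hR]

lemma setIntegral_id_mul_haar1 (hm : m < 2^j) :
    ∫ x in Icc (0:ℝ) 1, x * haar1 j m x = -(4⁻¹ : ℝ)^(j+1) := by
  have hId : ∀ u v : ℝ, u ≤ v → ∫ x in Ico u v, x = (v^2 - u^2) / 2 := fun u v huv => by
    rw [integral_Ico_eq_integral_Ioo, ← integral_Ioc_eq_integral_Ioo,
      ← intervalIntegral.integral_of_le huv, integral_id]
  rw [setIntegral_mul_haar1 hm (φ := fun x => x) continuous_id.integrableOn_Icc,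
    dyadicI_natCast, dyadicI_natCast, hId _ _ (by gcongr; linarith), hId _ _ (by gcongr; linarith)]
  rw [inv_pow, show (4:ℝ)^(j+1) = 2^j * 2^j * 4 by rw [pow_succ, ← mul_pow]; norm_num]
  push_cast
  field_simp
  ring

end Haar1

section HaarStep

open Set

variable {j m : ℕ}

/-- The contribution of one point with coordinate `z` to a one-dimensional Haar coefficient of
the counting function. -/
def haarStep (j m : ℕ) (z : ℝ) : ℝ := ∫ x in Icc (0:ℝ) 1, (Ioi z).indicator 1 x * haar1 j m x

lemma haarStep_eq (hm : m < 2^j) (z : ℝ) :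
    haarStep j m z = volume.real (Ioi z ∩ dyadicI (j+1 : ℕ) (2*m))
      - volume.real (Ioi z ∩ dyadicI (j+1 : ℕ) (2*m+1)) := by
  have hφ : IntegrableOn ((Ioi z).indicator (1 : ℝ → ℝ)) (Icc 0 1) :=
    (integrableOn_const measure_Icc_lt_top.ne).indicator measurableSet_Ioi
  rw [haarStep, setIntegral_mul_haar1 hm hφ, integral_indicator_one measurableSet_Ioi,
    integral_indicator_one measurableSet_Ioi, measureReal_restrict_apply measurableSet_Ioi,
    measureReal_restrict_apply measurableSet_Ioi]

lemma haarStep_eq_zero_of_notMem (hm : m < 2^j) {z : ℝ} (hz : z ∉ dyadicI j m) :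
    haarStep j m z = 0 := by
  have hL := dyadicI_succ_subset (j := j) (le_refl (2*m)) (by omega)
  have hR := dyadicI_succ_subset (j := j) (by omega : 2*m ≤ 2*m+1) le_rfl
  rw [haarStep_eq hm, sub_eq_zero]
  rw [dyadicI_natCast, mem_Ico, not_and_or, not_le, not_lt] at hz
  rcases hz with hz | hz
  · have hI : dyadicI j m ⊆ Ioi z := fun x hx => by
      rw [dyadicI_natCast] at hx
      exact hz.trans_le hx.1
    rw [inter_eq_right.2 (hL.trans hI), inter_eq_right.2 (hR.trans hI),
      measureReal_dyadicI, measureReal_dyadicI]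
  · have hI : Ioi z ∩ dyadicI j m = ∅ := by
      rw [dyadicI_natCast]
      exact eq_empty_of_forall_notMem fun x hx => (hx.2.2.trans_le hz).not_gt hx.1
    have hL' : Ioi z ∩ dyadicI (j+1 : ℕ) (2*m) = ∅ :=
      subset_empty_iff.1 (hI ▸ inter_subset_inter_right _ hL)
    have hR' : Ioi z ∩ dyadicI (j+1 : ℕ) (2*m+1) = ∅ :=
      subset_empty_iff.1 (hI ▸ inter_subset_inter_right _ hR)
    rw [hL', hR']

lemma abs_haarStep_le (hm : m < 2^j) (z : ℝ) : |haarStep j m z| ≤ (2⁻¹ : ℝ)^j := by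
  have hvol : ∀ n, volume.real (Ioi z ∩ dyadicI (j+1 : ℕ) n) ≤ (2⁻¹ : ℝ)^j := fun n =>
    calc volume.real (Ioi z ∩ dyadicI (j+1 : ℕ) n) ≤ volume.real (dyadicI (j+1 : ℕ) n) :=
          measureReal_mono inter_subset_right (volume_dyadicI_ne_top _ _)
      _ ≤ (2⁻¹ : ℝ)^j := by
          rw [measureReal_dyadicI]
          exact pow_le_pow_of_le_one (by norm_num) (by norm_num) (by omega)
  rw [haarStep_eq hm]
  exact abs_sub_le_of_nonneg_of_le measureReal_nonneg (hvol _) measureReal_nonneg (hvol _)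

end HaarStep

section Decomposition

open Set

variable {ι : Type*} [Fintype ι]

lemma setIntegral_univ_pi_prod (s : ι → Set ℝ) (φ : ι → ℝ → ℝ) :
    ∫ x in univ.pi s, ∏ i, φ i (x i) = ∏ i, ∫ t in s i, φ i t := by
  rw [volume_pi, Measure.restrict_pi_pi]
  exact integral_fintype_prod_eq_prod _

lemma integrableOn_univ_pi_prod {s : ι → Set ℝ} {φ : ι → ℝ → ℝ}
    (hφ : ∀ i, IntegrableOn (φ i) (s i)) :
    IntegrableOn (fun x => ∏ i, φ i (x i)) (univ.pi s) := by
  rw [IntegrableOn, volume_pi, Measure.restrict_pi_pi]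
  exact Integrable.fintype_prod hφ

variable {d : ℕ}

lemma natCard_lt_eq_sum_prod_indicator (S : ℕ → Fin d → ℝ) (k : ℕ) (x : Fin d → ℝ) :
    (Nat.card {l : Fin k // ∀ i, S l i < x i} : ℝ)
      = ∑ l ∈ Finset.range k, ∏ i, (Ioi (S l i)).indicator 1 (x i) := by
  rw [Nat.card_eq_fintype_card, Fintype.card_subtype, Finset.card_filter, Nat.cast_sum,
    ← Fin.sum_univ_eq_sum_range]
  refine Finset.sum_congr rfl fun l _ => ?_
  simp only [indicator_apply, mem_Ioi, Pi.one_apply, Finset.prod_boole, Finset.mem_univ,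
    true_implies]
  split_ifs <;> simp

lemma discSeq_mul_haarFn (S : ℕ → Fin d → ℝ) (k : ℕ) (j m : Fin d → ℕ) (x : Fin d → ℝ) :
    discSeq d S k x * haarFn d (fun i => (j i : ℤ)) m x
      = (∑ l ∈ Finset.range k, ∏ i, (Ioi (S l i)).indicator 1 (x i) * haar1 (j i) (m i) (x i)) / k
        - ∏ i, x i * haar1 (j i) (m i) (x i) := by
  simp only [discSeq, haarFn, natCard_lt_eq_sum_prod_indicator, sub_mul, div_mul_eq_mul_div,
    Finset.sum_mul, ← Finset.prod_mul_distrib]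

lemma haarCoeff_discSeq (S : ℕ → Fin d → ℝ) (k : ℕ) {j m : Fin d → ℕ} (hm : m ∈ Dfin0 d j) :
    haarCoeff d (discSeq d S k) (fun i => (j i : ℤ)) m
      = (∑ l ∈ Finset.range k, ∏ i, haarStep (j i) (m i) (S l i)) / k
        - ∏ i, -(4⁻¹ : ℝ)^(j i + 1) := by
  have hm i : m i < 2^(j i) := Finset.mem_range.1 (Fintype.mem_piFinset.1 hm i)
  have hIcc : IntegrableOn (fun _ => (1:ℝ)) (Icc (0:ℝ) 1) :=
    integrableOn_const measure_Icc_lt_top.ne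
  have hstep l : IntegrableOn
      (fun x : Fin d → ℝ => ∏ i, (Ioi (S l i)).indicator 1 (x i) * haar1 (j i) (m i) (x i))
      (unitCube d) :=
    integrableOn_univ_pi_prod fun i => integrableOn_mul_haar1 (hIcc.indicator measurableSet_Ioi) _ _
  have hid : IntegrableOn (fun x : Fin d → ℝ => ∏ i, x i * haar1 (j i) (m i) (x i)) (unitCube d) :=
    integrableOn_univ_pi_prod fun i => integrableOn_mul_haar1 continuous_id.integrableOn_Icc _ _
  simp_rw [haarCoeff, discSeq_mul_haarFn]
  rw [integral_sub ((integrable_finsetSum _ fun l _ => hstep l).div_const _) hid, integral_div,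
    integral_finsetSum _ fun l _ => hstep l]
  rw [unitCube, setIntegral_univ_pi_prod _ fun i t => t * haar1 (j i) (m i) t,
    Finset.prod_congr rfl fun i _ => setIntegral_id_mul_haar1 (hm i)]
  congr 2
  exact Finset.sum_congr rfl fun l _ => setIntegral_univ_pi_prod _
    fun i t => (Ioi (S l i)).indicator 1 t * haar1 (j i) (m i) t

end Decomposition

section SignedBlockSum

open Finset

lemma sum_Ioc_sign_mul_partialSum_sub (α : ℕ → ℝ) (P : ℝ) (a L : ℕ)
    (hα : ∀ l, a ≤ l → l < a + 2*L → α l = 0) :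
    ∑ k ∈ Ioc a (a + 2*L), (if k ≤ a + L then 1 else -1) * ((∑ l ∈ range k, α l) - k * P)
      = L^2 * P := by
  have hpartial : ∀ k ∈ Ioc a (a + 2*L), ∑ l ∈ range k, α l = ∑ l ∈ range a, α l := by
    intro k hk
    rw [mem_Ioc] at hk
    rw [← sum_range_add_sum_Ico _ (by omega : a ≤ k), add_eq_left]
    exact sum_eq_zero fun l hl => hα l (mem_Ico.1 hl).1 (by have := (mem_Ico.1 hl).2; omega)
  rw [sum_congr rfl fun k hk => by rw [hpartial k hk],
    ← sum_Ioc_consecutive _ (by omega : a ≤ a + L) (by omega : a + L ≤ a + 2*L),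
    show a + 2*L = a + L + L by ring, ← map_add_right_Ioc, sum_map, ← sum_add_distrib]
  simp only [addRightEmbedding_apply]
  have hpair : ∀ k ∈ Ioc a (a + L),
      (if k ≤ a + L then 1 else -1) * ((∑ l ∈ range a, α l) - k * P)
        + (if k + L ≤ a + L then 1 else -1) * ((∑ l ∈ range a, α l) - ↑(k + L) * P)
        = L * P := by
    intro k hk
    rw [mem_Ioc] at hk
    rw [if_pos hk.2, if_neg (by omega)]
    push_cast
    ring
  rw [sum_congr rfl hpair, sum_const, Nat.card_Ioc, Nat.add_sub_cancel_left, nsmul_eq_mul]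
  ring

end SignedBlockSum

section Vacant

open Finset

variable {d : ℕ}

lemma floor_mul_two_pow_eq_of_mem_dyadicI {j m : ℕ} {z : ℝ} (hz : z ∈ dyadicI j m) :
    ⌊z * 2^j⌋₊ = m := by
  rw [dyadicI_natCast, Set.mem_Ico, div_le_iff₀ (by positivity), lt_div_iff₀ (by positivity)] at hz
  rw [Nat.floor_eq_iff ((Nat.cast_nonneg m).trans hz.1)]
  exact hz

lemma floor_mul_two_pow_eq_of_mem_dyadicBox {j m : Fin d → ℕ} {x : Fin d → ℝ}
    (hx : x ∈ dyadicBox d (fun i => (j i : ℤ)) m) : (fun i => ⌊x i * 2^(j i)⌋₊) = m :=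
  funext fun i => floor_mul_two_pow_eq_of_mem_dyadicI (Set.mem_univ_pi.1 hx i)

open scoped Classical in
/-- Each time `l < T * B` visits at most one pair (block of times, dyadic box). -/
lemma card_filter_visited_le (S : ℕ → Fin d → ℝ) (j : Fin d → ℕ) (T B : ℕ) :
    #{p ∈ range B ×ˢ Dfin0 d j |
        ∃ l, T * p.1 ≤ l ∧ l < T * p.1 + T ∧ S l ∈ dyadicBox d (fun i => (j i : ℤ)) p.2}
      ≤ T * B := by
  calc _ ≤ #((range (T * B)).image fun l => (l / T, fun i => ⌊S l i * 2^(j i)⌋₊)) := by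
        refine card_le_card fun p hp => ?_
        obtain ⟨hpB, l, hl₁, hl₂, hSl⟩ := mem_filter.1 hp
        have hp1 : p.1 < B := mem_range.1 (mem_product.1 hpB).1
        refine mem_image.2 ⟨l, mem_range.2 ?_, ?_⟩
        · nlinarith
        · rw [Nat.div_eq_of_lt_le (k := p.1) (by linarith) (by linarith),
            floor_mul_two_pow_eq_of_mem_dyadicBox hSl]
    _ ≤ T * B := card_image_le.trans (card_range _).le

lemma card_Dfin0 (j : Fin d → ℕ) : #(Dfin0 d j) = 2^(∑ i, j i) := by
  rw [Dfin0, Fintype.card_piFinset]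
  simp only [card_range, prod_pow_eq_pow_sum]

open scoped Classical in
lemma card_mul_card_le_add_card_filter_not_visited (S : ℕ → Fin d → ℝ) (j : Fin d → ℕ) (T B : ℕ) :
    #(range B) * #(Dfin0 d j) ≤ T * B + #{p ∈ range B ×ˢ Dfin0 d j |
        ¬ ∃ l, T * p.1 ≤ l ∧ l < T * p.1 + T ∧ S l ∈ dyadicBox d (fun i => (j i : ℤ)) p.2} := by
  rw [← card_product, ← card_filter_add_card_filter_not
    (fun p => ∃ l, T * p.1 ≤ l ∧ l < T * p.1 + T ∧ S l ∈ dyadicBox d (fun i => (j i : ℤ)) p.2)]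
  exact Nat.add_le_add_right (card_filter_visited_le S j T B) _

end Vacant

section VacantBox

open Finset

variable {d : ℕ}

lemma abs_prod_neg_inv_four_pow (j : Fin d → ℕ) :
    |∏ i, -(4⁻¹ : ℝ)^(j i + 1)| = (4⁻¹ : ℝ)^(∑ i, j i + d) := by
  simp only [abs_prod, abs_neg, abs_pow, abs_inv, Nat.abs_ofNat, prod_pow_eq_pow_sum,
    sum_add_distrib, sum_const, card_univ, Fintype.card_fin, smul_eq_mul, mul_one]

/-- While the box `I_{j,m}` receives no point, `k ↦ k ⟨D^k, h_{j,m}⟩` is affine with slope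
`-∏ᵢ ∫ x h_{jᵢ,mᵢ}(x) dx`, which the alternating sum over the block extracts. -/
lemma pow_mul_sq_le_sum_mul_abs_haarCoeff (S : ℕ → Fin d → ℝ) {j m : Fin d → ℕ}
    (hm : m ∈ Dfin0 d j) (a L : ℕ)
    (hvacant : ∀ l, a ≤ l → l < a + 2*L → S l ∉ dyadicBox d (fun i => (j i : ℤ)) m) :
    (4⁻¹ : ℝ)^(∑ i, j i + d) * L^2
      ≤ ∑ k ∈ Ioc a (a + 2*L), (k:ℝ) * |haarCoeff d (discSeq d S k) (fun i => (j i : ℤ)) m| := by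
  set α : ℕ → ℝ := fun l => ∏ i, haarStep (j i) (m i) (S l i)
  set P : ℝ := ∏ i, -(4⁻¹ : ℝ)^(j i + 1)
  set c : ℕ → ℝ := fun k => haarCoeff d (discSeq d S k) (fun i => (j i : ℤ)) m
  have hα : ∀ l, a ≤ l → l < a + 2*L → α l = 0 := fun l hl₁ hl₂ => by
    obtain ⟨i, hi⟩ := not_forall.1 (mt Set.mem_univ_pi.2 (hvacant l hl₁ hl₂))
    exact prod_eq_zero (mem_univ i) (haarStep_eq_zero_of_notMem
      (mem_range.1 (Fintype.mem_piFinset.1 hm i)) hi)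
  have hcoeff : ∀ k ∈ Ioc a (a + 2*L), (∑ l ∈ range k, α l) - k * P = k * c k := fun k hk => by
    have hk : (k : ℝ) ≠ 0 := Nat.cast_ne_zero.2 (by have := (mem_Ioc.1 hk).1; omega)
    simp only [c]
    rw [haarCoeff_discSeq S k hm, mul_sub (k : ℝ), mul_div_cancel₀ _ hk]
  calc (4⁻¹ : ℝ)^(∑ i, j i + d) * L^2 = |L^2 * P| := by
        rw [abs_mul, abs_prod_neg_inv_four_pow, abs_of_nonneg (by positivity), mul_comm]
    _ = |∑ k ∈ Ioc a (a + 2*L), (if k ≤ a + L then 1 else -1) * (k * c k)| := by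
        rw [← sum_Ioc_sign_mul_partialSum_sub α P a L hα]
        exact congrArg _ (sum_congr rfl fun k hk => by rw [hcoeff k hk])
    _ ≤ _ := (abs_sum_le_sum_abs _ _).trans_eq <| sum_congr rfl fun k _ => by
        rw [abs_mul, abs_mul, Nat.abs_cast]
        split_ifs <;> simp [c]

end VacantBox

section Energy

open Finset

variable {d : ℕ}

/-- The level-`j` term of the `S⁰_{r,r}B` sum of `f`. -/
def haarEnergy (d : ℕ) (r : ℝ) (f : (Fin d → ℝ) → ℝ) (j : Fin d → ℕ) : ℝ :=
  ((2:ℝ)^(∑ i, j i))^(r-1) * ∑ m ∈ Dfin0 d j, |haarCoeff d f (fun i => (j i : ℤ)) m|^r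

lemma haarEnergy_nonneg (r : ℝ) (f : (Fin d → ℝ) → ℝ) (j : Fin d → ℕ) : 0 ≤ haarEnergy d r f j :=
  mul_nonneg (by positivity) (sum_nonneg fun _ _ => by positivity)

lemma sum_range_sum_Ioc {M : Type*} [AddCommMonoid M] (f : ℕ → M) (T B : ℕ) :
    ∑ b ∈ range B, ∑ k ∈ Ioc (T * b) (T * b + T), f k = ∑ k ∈ Ioc 0 (T * B), f k := by
  induction B with
  | zero => simp
  | succ B ih =>
    rw [sum_range_succ, ih, sum_Ioc_consecutive f (Nat.zero_le _) (by omega), mul_add_one]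

lemma rpow_le_sum_rpow_mul_abs_haarCoeff (S : ℕ → Fin d → ℝ) {r : ℝ} (hr : 1 ≤ r)
    {j m : Fin d → ℕ} (hj : 2 ≤ ∑ i, j i) (hm : m ∈ Dfin0 d j) (a : ℕ)
    (hvacant : ∀ l, a ≤ l → l < a + 2^(∑ i, j i - 1) →
      S l ∉ dyadicBox d (fun i => (j i : ℤ)) m) :
    ((4⁻¹ : ℝ)^(d+2))^r ≤ ((2:ℝ)^(∑ i, j i))^(r-1) * ∑ k ∈ Ioc a (a + 2^(∑ i, j i - 1)),
      (k:ℝ)^r * |haarCoeff d (discSeq d S k) (fun i => (j i : ℤ)) m|^r := by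
  set n := ∑ i, j i
  set L := 2^(n-2)
  have hT : 2^(n-1) = 2 * L := by rw [← pow_succ']; congr 1; omega
  have hκ : (4⁻¹ : ℝ)^(n + d) * (L:ℝ)^2 = (4⁻¹ : ℝ)^(d+2) := by
    have hL2 : (L:ℝ)^2 = 4^(n-2) := by
      rw [Nat.cast_pow, ← pow_mul, mul_comm, pow_mul]
      norm_num
    rw [hL2, show n + d = (d + 2) + (n - 2) by omega, pow_add, mul_assoc, inv_pow (4:ℝ) (n-2),
      inv_mul_cancel₀ (by positivity), mul_one]
  have h2L : ((2 * L : ℕ) : ℝ) ≤ 2^n := by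
    rw [← hT]
    exact_mod_cast Nat.pow_le_pow_right two_pos (by omega)
  rw [hT] at hvacant ⊢
  calc ((4⁻¹ : ℝ)^(d+2))^r
      ≤ (∑ k ∈ Ioc a (a + 2*L), (k:ℝ) * |haarCoeff d (discSeq d S k) (fun i => (j i : ℤ)) m|)^r :=
        Real.rpow_le_rpow (by positivity)
          (hκ ▸ pow_mul_sq_le_sum_mul_abs_haarCoeff S hm a L hvacant) (by linarith)
    _ ≤ _ := Real.rpow_sum_le_const_mul_sum_rpow_of_nonneg _ hr (fun k _ => by positivity)
    _ ≤ _ := by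
        rw [Nat.card_Ioc, Nat.add_sub_cancel_left]
        simp only [Real.mul_rpow (Nat.cast_nonneg _) (abs_nonneg _)]
        gcongr

open scoped Classical in
lemma rpow_mul_two_pow_le_sum_haarEnergy (S : ℕ → Fin d → ℝ) {r : ℝ} (hr : 1 ≤ r) {μ : ℕ}
    {j : Fin d → ℕ} (hj : 2 ≤ ∑ i, j i) (hjμ : ∑ i, j i ≤ μ + 1) :
    ((4⁻¹ : ℝ)^(d+2))^r * 2^μ
      ≤ ∑ k ∈ Ioc (0:ℕ) (2^μ), (k:ℝ)^r * haarEnergy d r (discSeq d S k) j := by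
  set n := ∑ i, j i
  set T := 2^(n-1)
  set B := 2^(μ+1-n)
  set c : ℕ → (Fin d → ℕ) → ℝ :=
    fun k m => (k:ℝ)^r * |haarCoeff d (discSeq d S k) (fun i => (j i : ℤ)) m|^r
  have hTB : T * B = 2^μ := by rw [← pow_add]; congr 1; omega
  set V := {p ∈ range B ×ˢ Dfin0 d j |
    ¬ ∃ l, T * p.1 ≤ l ∧ l < T * p.1 + T ∧ S l ∈ dyadicBox d (fun i => (j i : ℤ)) p.2}
  have hV : 2^μ ≤ #V := by
    have := card_mul_card_le_add_card_filter_not_visited S j T B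
    rw [card_range, card_Dfin0, hTB, show B * 2^n = 2^μ * 2 by
      rw [← pow_succ, ← pow_add]; congr 1; omega] at this
    have : 2^μ * 2 ≤ 2^μ + #V := this
    omega
  have hbox : ∀ p ∈ V, ((4⁻¹ : ℝ)^(d+2))^r
      ≤ ((2:ℝ)^n)^(r-1) * ∑ k ∈ Ioc (T * p.1) (T * p.1 + T), c k p.2 := fun p hp => by
    obtain ⟨hpB, hvacant⟩ := mem_filter.1 hp
    simp only [not_exists, not_and] at hvacant
    exact rpow_le_sum_rpow_mul_abs_haarCoeff S hr hj (mem_product.1 hpB).2 _ hvacant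
  calc ((4⁻¹ : ℝ)^(d+2))^r * 2^μ ≤ ∑ p ∈ V, ((4⁻¹ : ℝ)^(d+2))^r := by
        rw [sum_const, nsmul_eq_mul, mul_comm]
        gcongr
        exact_mod_cast hV
    _ ≤ ∑ p ∈ range B ×ˢ Dfin0 d j,
          ((2:ℝ)^n)^(r-1) * ∑ k ∈ Ioc (T * p.1) (T * p.1 + T), c k p.2 :=
        (sum_le_sum hbox).trans (sum_le_sum_of_subset_of_nonneg (filter_subset _ _)
          fun _ _ _ => by positivity)
    _ = ∑ k ∈ Ioc (0:ℕ) (2^μ), (k:ℝ)^r * haarEnergy d r (discSeq d S k) j := by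
        simp only [← mul_sum, sum_product_right, sum_range_sum_Ioc, hTB, haarEnergy]
        rw [sum_comm, mul_sum]
        exact sum_congr rfl fun k _ => by simp only [c, ← mul_sum]; ring

end Energy

section EnergyUpperBound

open Finset

variable {d : ℕ}

lemma abs_haarCoeff_discSeq_le (S : ℕ → Fin d → ℝ) (k : ℕ) {j m : Fin d → ℕ}
    (hm : m ∈ Dfin0 d j) :
    |haarCoeff d (discSeq d S k) (fun i => (j i : ℤ)) m| ≤ 2 * (2⁻¹ : ℝ)^(∑ i, j i) := by
  have hα : ∀ l, |∏ i, haarStep (j i) (m i) (S l i)| ≤ (2⁻¹ : ℝ)^(∑ i, j i) := fun l => by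
    rw [abs_prod, ← prod_pow_eq_pow_sum]
    exact prod_le_prod (fun i _ => abs_nonneg _) fun i _ =>
      abs_haarStep_le (mem_range.1 (Fintype.mem_piFinset.1 hm i)) _
  have hsum : |(∑ l ∈ range k, ∏ i, haarStep (j i) (m i) (S l i)) / k| ≤ (2⁻¹ : ℝ)^(∑ i, j i) := by
    rcases Nat.eq_zero_or_pos k with rfl | hk
    · simp
    rw [abs_div, Nat.abs_cast, div_le_iff₀ (by positivity)]
    calc _ ≤ ∑ l ∈ range k, |∏ i, haarStep (j i) (m i) (S l i)| := abs_sum_le_sum_abs _ _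
      _ ≤ ∑ l ∈ range k, (2⁻¹ : ℝ)^(∑ i, j i) := sum_le_sum fun l _ => hα l
      _ = _ := by rw [sum_const, card_range, nsmul_eq_mul, mul_comm]
  have hP : |∏ i, -(4⁻¹ : ℝ)^(j i + 1)| ≤ (2⁻¹ : ℝ)^(∑ i, j i) := by
    rw [abs_prod_neg_inv_four_pow]
    calc (4⁻¹ : ℝ)^(∑ i, j i + d) ≤ (4⁻¹ : ℝ)^(∑ i, j i) :=
          pow_le_pow_of_le_one (by norm_num) (by norm_num) (by omega)
      _ ≤ (2⁻¹ : ℝ)^(∑ i, j i) := pow_le_pow_left₀ (by norm_num) (by norm_num) _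
  rw [haarCoeff_discSeq S k hm, two_mul]
  exact (abs_sub _ _).trans (add_le_add hsum hP)

lemma haarEnergy_discSeq_le (S : ℕ → Fin d → ℝ) {r : ℝ} (hr : 0 ≤ r) (k : ℕ) (j : Fin d → ℕ) :
    haarEnergy d r (discSeq d S k) j ≤ 2^r := by
  have ht : (0:ℝ) < 2^(∑ i, j i) := by positivity
  calc haarEnergy d r (discSeq d S k) j
      ≤ ((2:ℝ)^(∑ i, j i))^(r-1) * ∑ m ∈ Dfin0 d j, (2 * ((2:ℝ)^(∑ i, j i))⁻¹)^r := by
        refine mul_le_mul_of_nonneg_left (sum_le_sum fun m hm => ?_) (by positivity)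
        refine Real.rpow_le_rpow (abs_nonneg _) ?_ hr
        simpa only [inv_pow] using abs_haarCoeff_discSeq_le S k hm
    _ = 2^r := by
        rw [sum_const, card_Dfin0, nsmul_eq_mul, Nat.cast_pow, Nat.cast_ofNat,
          Real.mul_rpow (by norm_num) (by positivity), Real.inv_rpow ht.le,
          Real.rpow_sub_one ht.ne']
        field_simp

end EnergyUpperBound

section Pigeonhole

open Finset

variable {d : ℕ}

lemma sum_Ioc_rpow_mul_sum_haarEnergy_le (S : ℕ → Fin d → ℝ) {r : ℝ} (hr : 0 ≤ r)
    (C : Finset (Fin d → ℕ)) (K : ℕ) :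
    ∑ k ∈ Ioc 0 K, (k:ℝ)^r * ∑ j ∈ C, haarEnergy d r (discSeq d S k) j
      ≤ K * (K:ℝ)^r * (#C * 2^r) := by
  calc _ ≤ ∑ k ∈ Ioc 0 K, (K:ℝ)^r * (#C * 2^r) := by
        refine sum_le_sum fun k hk => mul_le_mul ?_ ?_
          (sum_nonneg fun j _ => haarEnergy_nonneg _ _ _) (by positivity)
        · exact Real.rpow_le_rpow (by positivity) (by exact_mod_cast (mem_Ioc.1 hk).2) hr
        · refine (sum_le_sum fun j _ => haarEnergy_discSeq_le S hr k j).trans_eq ?_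
          rw [sum_const, nsmul_eq_mul]
    _ = _ := by rw [sum_const, Nat.card_Ioc, Nat.sub_zero, nsmul_eq_mul, mul_assoc]

lemma exists_mem_Ioc_card_mul_le_sum_haarEnergy (S : ℕ → Fin d → ℝ) {r : ℝ} (hr : 1 ≤ r)
    {μ K : ℕ} (C : Finset (Fin d → ℕ)) (hC : ∀ j ∈ C, 2 ≤ ∑ i, j i ∧ ∑ i, j i ≤ μ + 1)
    (hK : K < 2^μ) (hμ : 2 * 2^r * (K:ℝ)^r * K ≤ ((4⁻¹ : ℝ)^(d+2))^r * 2^μ) :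
    ∃ k ∈ Ioc K (2^μ), #C * (((4⁻¹ : ℝ)^(d+2))^r / 2 / (k:ℝ)^r)
      ≤ ∑ j ∈ C, haarEnergy d r (discSeq d S k) j := by
  set c₀ := ((4⁻¹ : ℝ)^(d+2))^r
  set R : ℕ → ℝ := fun k => ∑ j ∈ C, haarEnergy d r (discSeq d S k) j
  have htotal : #C * (c₀ * 2^μ) ≤ ∑ k ∈ Ioc (0:ℕ) (2^μ), (k:ℝ)^r * R k := by
    calc #C * (c₀ * 2^μ) = ∑ j ∈ C, c₀ * 2^μ := by rw [sum_const, nsmul_eq_mul]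
      _ ≤ ∑ j ∈ C, ∑ k ∈ Ioc (0:ℕ) (2^μ), (k:ℝ)^r * haarEnergy d r (discSeq d S k) j :=
          sum_le_sum fun j hj => rpow_mul_two_pow_le_sum_haarEnergy S hr (hC j hj).1 (hC j hj).2
      _ = _ := by
          rw [sum_comm]
          simp only [R, mul_sum]
  have hhead := sum_Ioc_rpow_mul_sum_haarEnergy_le S (zero_le_one.trans hr) C K
  have htail : ∑ k ∈ Ioc K (2^μ), #C * c₀ / 2 ≤ ∑ k ∈ Ioc K (2^μ), (k:ℝ)^r * R k := by
    rw [← sum_Ioc_consecutive _ (Nat.zero_le K) hK.le] at htotal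
    have hcard : (#(Ioc K (2^μ)) : ℝ) ≤ 2^μ := by
      rw [Nat.card_Ioc]
      exact_mod_cast Nat.sub_le _ _
    rw [sum_const, nsmul_eq_mul]
    nlinarith [(by positivity : (0:ℝ) ≤ #C), (by positivity : (0:ℝ) ≤ #C * c₀)]
  obtain ⟨k, hk, hkR⟩ := exists_le_of_sum_le (nonempty_Ioc.2 hK) htail
  have hk0 : (0:ℝ) < k := by exact_mod_cast (Nat.zero_le K).trans_lt (mem_Ioc.1 hk).1
  refine ⟨k, hk, ?_⟩
  rwa [mul_div_assoc', div_le_iff₀ (by positivity), mul_comm _ ((k:ℝ)^r), ← mul_div_assoc]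

end Pigeonhole

section BesovSum

open Finset

variable {d : ℕ}

lemma sum_le_card_rpow_mul_sum_rpow_rpow {ι : Type*} (s : Finset ι) {f : ι → ℝ}
    (hf : ∀ i ∈ s, 0 ≤ f i) {θ : ℝ} (hθ : 1 ≤ θ) :
    ∑ i ∈ s, f i ≤ (#s : ℝ)^(1 - 1/θ) * (∑ i ∈ s, f i ^ θ)^(1/θ) := by
  have hθ0 : 0 < θ := by linarith
  have key := Real.rpow_le_rpow (Real.rpow_nonneg (sum_nonneg hf) θ)
    (Real.rpow_sum_le_const_mul_sum_rpow_of_nonneg s hθ hf) (one_div_nonneg.2 hθ0.le)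
  rwa [← Real.rpow_mul (sum_nonneg hf), mul_one_div_cancel hθ0.ne', Real.rpow_one,
    Real.mul_rpow (by positivity) (sum_nonneg fun i hi => by have := hf i hi; positivity),
    ← Real.rpow_mul (by positivity), sub_mul, one_mul, mul_one_div_cancel hθ0.ne'] at key

lemma haarEnergy_rpow_le (f : (Fin d → ℝ) → ℝ) {p q r : ℝ} (hr : 0 < r) (hrp : r ≤ p)
    (hq : 0 ≤ q) (j : Fin d → ℕ) :
    haarEnergy d r f j ^ (q/r) ≤ (2:ℝ)^(((∑ i, j i : ℕ) : ℝ) * (1 - 1/p) * q)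
      * (∑ m ∈ Dfin0 d j, |haarCoeff d f (fun i => (j i : ℤ)) m|^p)^(q/p) := by
  have hp : 0 < p := hr.trans_le hrp
  set n := ∑ i, j i
  set A := ∑ m ∈ Dfin0 d j, |haarCoeff d f (fun i => (j i : ℤ)) m|^p
  have ht : (0:ℝ) < 2^n := by positivity
  have hholder := sum_le_card_rpow_mul_sum_rpow_rpow (Dfin0 d j)
    (f := fun m => |haarCoeff d f (fun i => (j i : ℤ)) m|^r) (fun _ _ => by positivity)
    ((one_le_div hr).2 hrp)
  simp only [card_Dfin0, Nat.cast_pow, Nat.cast_ofNat, ← Real.rpow_mul (abs_nonneg _),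
    mul_div_cancel₀ p hr.ne', one_div_div] at hholder
  have hE : haarEnergy d r f j ≤ ((2:ℝ)^n)^(r - r/p) * A^(r/p) := by
    calc haarEnergy d r f j ≤ ((2:ℝ)^n)^(r-1) * (((2:ℝ)^n)^(1 - r/p) * A^(r/p)) :=
          mul_le_mul_of_nonneg_left hholder (by positivity)
      _ = ((2:ℝ)^n)^(r - r/p) * A^(r/p) := by
          rw [← mul_assoc, ← Real.rpow_add ht]
          ring_nf
  calc haarEnergy d r f j ^ (q/r) ≤ (((2:ℝ)^n)^(r - r/p) * A^(r/p))^(q/r) :=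
        Real.rpow_le_rpow (haarEnergy_nonneg r f j) hE (div_nonneg hq hr.le)
    _ = _ := by
        rw [Real.mul_rpow (by positivity) (by positivity), ← Real.rpow_mul ht.le,
          ← Real.rpow_mul (by positivity), ← Real.rpow_natCast, ← Real.rpow_mul zero_le_two]
        congr 2 <;> field_simp

lemma ofReal_sum_le_besovSum (p q s : ℝ) (f : (Fin d → ℝ) → ℝ) (C : Finset (Fin d → ℕ)) :
    ENNReal.ofReal (∑ j ∈ C, (2:ℝ)^(((∑ i, j i : ℕ) : ℝ) * (s - 1/p + 1) * q)
      * (∑ m ∈ Dfin0 d j, |haarCoeff d f (fun i => (j i : ℤ)) m|^p)^(q/p))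
      ≤ besovSum d p q s f := by
  let e : (Fin d → ℕ) ↪ validJ d :=
    ⟨fun j => ⟨fun i => (j i : ℤ), fun i => by simp⟩, fun j j' h =>
      funext fun i => by simpa using congrFun (congrArg Subtype.val h) i⟩
  rw [ENNReal.ofReal_sum_of_nonneg fun j _ => by positivity, besovSum]
  refine le_of_eq_of_le ?_ (ENNReal.sum_le_tsum (C.map e))
  rw [sum_map]
  -- `Int.toNat` of a cast natural number reduces, so the summands agree definitionally
  rfl

lemma card_mul_rpow_le_besovSum (f : (Fin d → ℝ) → ℝ) {p q r : ℝ} (hr : 0 < r) (hrp : r ≤ p)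
    (hrq : r ≤ q) (C : Finset (Fin d → ℕ)) {x : ℝ} (hx : 0 ≤ x)
    (h : #C * x ≤ ∑ j ∈ C, haarEnergy d r f j) :
    ENNReal.ofReal (#C * x^(q/r)) ≤ besovSum d p q 0 f := by
  have hθ : 1 ≤ q/r := (one_le_div hr).2 hrq
  refine le_trans (ENNReal.ofReal_le_ofReal ?_) (ofReal_sum_le_besovSum p q 0 f C)
  rcases C.eq_empty_or_nonempty with rfl | hC
  · simp
  have hcard : (0:ℝ) < #C := by exact_mod_cast card_pos.2 hC
  have hjensen : (#C : ℝ)^(q/r - 1) * (#C * x^(q/r))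
      ≤ (#C : ℝ)^(q/r - 1) * ∑ j ∈ C, haarEnergy d r f j ^ (q/r) :=
    calc (#C : ℝ)^(q/r - 1) * (#C * x^(q/r)) = (#C * x)^(q/r) := by
          rw [Real.mul_rpow hcard.le hx, ← mul_assoc, ← Real.rpow_add_one hcard.ne', sub_add_cancel]
      _ ≤ (∑ j ∈ C, haarEnergy d r f j)^(q/r) := Real.rpow_le_rpow (by positivity) h (by linarith)
      _ ≤ _ := Real.rpow_sum_le_const_mul_sum_rpow_of_nonneg C hθ
          fun j _ => haarEnergy_nonneg r f j
  refine (le_of_mul_le_mul_left hjensen (by positivity)).trans (sum_le_sum fun j _ => ?_)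
  exact (haarEnergy_rpow_le f hr hrp (hr.le.trans hrq) j).trans_eq
    (by rw [zero_sub, neg_add_eq_sub])

end BesovSum

section Arithmetic

lemma ENNReal.ofReal_le_rpow_one_div_of_ofReal_rpow_le {x q : ℝ} (hx : 0 ≤ x) (hq : 0 < q)
    {B : ℝ≥0∞} (h : ENNReal.ofReal (x^q) ≤ B) : ENNReal.ofReal x ≤ B^(1/q) :=
  calc ENNReal.ofReal x = ENNReal.ofReal (x^q)^(1/q) := by
        rw [ENNReal.ofReal_rpow_of_nonneg (by positivity) (by positivity), ← Real.rpow_mul hx,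
          mul_one_div_cancel hq.ne', Real.rpow_one]
    _ ≤ B^(1/q) := ENNReal.rpow_le_rpow h (by positivity)

lemma mul_rpow_one_div_mul_inv_mul_rpow_div {a x y q : ℝ} (ha : 0 ≤ a) (hx : 0 ≤ x)
    (hy : 0 ≤ y) (hq : 0 < q) (d : ℕ) :
    (a^(1/q) * x⁻¹ * y^((d:ℝ)/q))^q = a * y^d / x^q := by
  rw [Real.mul_rpow (by positivity) (by positivity),
    Real.mul_rpow (by positivity) (inv_nonneg.2 hx),
    ← Real.rpow_mul ha, ← Real.rpow_mul hy, Real.inv_rpow hx, one_div_mul_cancel hq.ne',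
    div_mul_cancel₀ _ hq.ne', Real.rpow_one, Real.rpow_natCast, div_eq_mul_inv]
  ring

lemma exists_two_le_lt_two_pow_mul {d : ℕ} (hd : 0 < d) (K : ℕ) (a : ℝ) {b : ℝ} (hb : 0 < b) :
    ∃ W, 2 ≤ W ∧ K < 2^(d*W) ∧ a ≤ b * 2^(d*W) := by
  obtain ⟨W₀, hW₀⟩ := pow_unbounded_of_one_lt (a / b) one_lt_two
  set W := max 2 (max K W₀)
  have hdW : W ≤ d * W := Nat.le_mul_of_pos_left W hd
  refine ⟨W, le_max_left _ _, ?_, ?_⟩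
  · calc K < 2^K := Nat.lt_two_pow_self
      _ ≤ 2^(d*W) := Nat.pow_le_pow_right two_pos ((le_max_left _ _).trans
          ((le_max_right _ _).trans hdW))
  · rw [← div_le_iff₀' hb]
    exact hW₀.le.trans (pow_le_pow_right₀ one_le_two ((le_max_right _ _).trans
      ((le_max_right _ _).trans hdW)))

end Arithmetic

section LevelCube

open Finset

def levelCube (d W : ℕ) : Finset (Fin d → ℕ) := Fintype.piFinset fun _ => Icc 2 W

lemma card_levelCube (d W : ℕ) : #(levelCube d W) = (W - 1)^d := by
  rw [levelCube, Fintype.card_piFinset, prod_const, Nat.card_Icc, card_univ, Fintype.card_fin]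
  rfl

lemma sum_mem_Icc_of_mem_levelCube {d W : ℕ} (hd : 0 < d) {j : Fin d → ℕ}
    (hj : j ∈ levelCube d W) : ∑ i, j i ∈ Icc 2 (d * W) := by
  have hji i : 2 ≤ j i ∧ j i ≤ W := mem_Icc.1 (Fintype.mem_piFinset.1 hj i)
  have h₁ := sum_le_sum fun i (_ : i ∈ univ) => (hji i).1
  have h₂ := sum_le_sum fun i (_ : i ∈ univ) => (hji i).2
  simp only [sum_const, card_univ, Fintype.card_fin, smul_eq_mul] at h₁ h₂
  exact mem_Icc.2 ⟨by nlinarith, by linarith⟩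

lemma log_pow_le_mul_card_levelCube {d W k : ℕ} (hW : 2 ≤ W) (hk : 0 < k) (hkW : k ≤ 2^(d*W)) :
    Real.log k ^ d ≤ (2*d)^d * #(levelCube d W) := by
  rw [card_levelCube, Nat.cast_pow, ← mul_pow]
  refine pow_le_pow_left₀ (Real.log_natCast_nonneg k) ?_ d
  have hlog2 : Real.log 2 ≤ 1 := (Real.log_le_sub_one_of_pos two_pos).trans (by norm_num)
  have hW' : (W : ℝ) ≤ 2 * ((W - 1 : ℕ) : ℝ) := by
    rw [Nat.cast_sub (by omega), Nat.cast_one]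
    have : (2:ℝ) ≤ W := by exact_mod_cast hW
    linarith
  calc Real.log k ≤ Real.log ((2^(d*W) : ℕ) : ℝ) :=
        Real.log_le_log (by exact_mod_cast hk) (by exact_mod_cast hkW)
    _ = (d * W) * Real.log 2 := by rw [Nat.cast_pow, Nat.cast_ofNat, Real.log_pow, Nat.cast_mul]
    _ ≤ d * W := mul_le_of_le_one_right (by positivity) hlog2
    _ ≤ 2 * d * ((W - 1 : ℕ) : ℝ) := by nlinarith [(Nat.cast_nonneg d : (0:ℝ) ≤ d)]

lemma exists_gt_ofReal_le_besovSum {d : ℕ} (hd : 0 < d) {p q : ℝ} (hp : 1 ≤ p) (hq : 1 ≤ q)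
    (S : ℕ → Fin d → ℝ) (K : ℕ) :
    ∃ k > K, ENNReal.ofReal ((((4⁻¹ : ℝ)^(d+2))^(min p q) / 2)^(q / min p q) / (2*d)^d
      * Real.log k ^ d / (k:ℝ)^q) ≤ besovSum d p q 0 (discSeq d S k) := by
  set r := min p q
  have hr : 1 ≤ r := le_min hp hq
  set c₀ : ℝ := ((4⁻¹ : ℝ)^(d+2))^r
  obtain ⟨W, hW, hKW, hcW⟩ := exists_two_le_lt_two_pow_mul hd K (2 * 2^r * (K:ℝ)^r * K)
    (by positivity : 0 < c₀)
  obtain ⟨k, hk, hkC⟩ := exists_mem_Ioc_card_mul_le_sum_haarEnergy S hr (levelCube d W)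
    (fun j hj => (mem_Icc.1 (sum_mem_Icc_of_mem_levelCube hd hj)).imp_right Nat.le_succ_of_le)
    hKW hcW
  obtain ⟨hKk, hkW⟩ := mem_Ioc.1 hk
  have hk0 : 0 < k := (Nat.zero_le K).trans_lt hKk
  have hkpos : (0:ℝ) < k := by exact_mod_cast hk0
  refine ⟨k, hKk, le_trans (ENNReal.ofReal_le_ofReal ?_) (card_mul_rpow_le_besovSum (r := r)
    (discSeq d S k) (by linarith) (min_le_left p q) (min_le_right p q) _ (by positivity) hkC)⟩
  rw [Real.div_rpow (x := c₀ / 2) (by positivity) (by positivity), ← Real.rpow_mul hkpos.le,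
    mul_div_cancel₀ _ (by linarith), ← mul_div_assoc]
  refine div_le_div_of_nonneg_right ?_ (by positivity)
  rw [div_mul_eq_mul_div, div_le_iff₀ (by positivity), mul_comm _ ((c₀ / 2)^(q/r)), mul_assoc]
  exact mul_le_mul_of_nonneg_left ((log_pow_le_mul_card_levelCube hW hk0 hkW).trans_eq
    (mul_comm _ _)) (by positivity)

end LevelCube

/-- Besov `S⁰_{p,q}B` lower bound for sequences: there is `c > 0` such that
for every infinite sequence `S` in `[0,1)^d`, the `S⁰_{p,q}B`-norm of `D_S^N` is at least
`c · N⁻¹ (log N)^{d/q}` for infinitely many `N`. -/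
theorem besov_s0_lower_bound (d : ℕ) (hd : 0 < d) (p q : ℝ) (hp : 1 ≤ p) (hq : 1 ≤ q) :
    ∃ c : ℝ, 0 < c ∧ ∀ S : ℕ → Fin d → ℝ, (∀ k, S k ∈ unitCubeIco d) →
      {N : ℕ | ENNReal.ofReal (c * (N:ℝ)⁻¹ * Real.log N ^ ((d:ℝ)/q)) ≤
        (besovSum d p q 0 (discSeq d S N)) ^ (1/q)}.Infinite := by
  set A : ℝ := (((4⁻¹ : ℝ)^(d+2))^(min p q) / 2)^(q / min p q) / (2*d)^d
  refine ⟨A^(1/q), by positivity, fun S _ => Set.infinite_of_not_bddAbove fun ⟨K, hK⟩ => ?_⟩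
  obtain ⟨k, hKk, hk⟩ := exists_gt_ofReal_le_besovSum hd hp hq S K
  refine hKk.not_ge (hK (ENNReal.ofReal_le_rpow_one_div_of_ofReal_rpow_le (by positivity)
    (by linarith) ?_))
  rwa [mul_rpow_one_div_mul_inv_mul_rpow_div (by positivity) (Nat.cast_nonneg k)
    (Real.log_natCast_nonneg k) (by linarith)]
end
end

section
/- Let d ∈ ℕ and let f(x) = x_1⋯x_d for x = (x_1,…,x_d) ∈ [0,1)^d. Then there exist constants c_d, C_d > 0 depending only on d such that for every j ∈ ℕ_{−1}^d and every m ∈ 𝔻_j: c_d · 2^{−2|j|} ≤ |⟨f, h_{j,m}⟩| ≤ C_d · 2^{−2|j|}. -/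
open MeasureTheory
open scoped ENNReal

noncomputable section

/-! The Haar coefficient factorises over the coordinates (Fubini), and in each coordinate
`∫ x h_{j,m}(x) dx` is `1/2` for `j = -1` and `-2^{-2j}/4` for `j ≥ 0`, since on the two halves
of `I_{j,m}` the identity has means differing by `2^{-j}/2`. Hence
`|⟨f, h_{j,m}⟩| = w · 2^{-2|j|}` with a weight `4^{-d} ≤ w ≤ 1`. -/

lemma setIntegral_Ico_id {a b : ℝ} (hab : a ≤ b) : ∫ x in Set.Ico a b, x = (b ^ 2 - a ^ 2) / 2 := by
  rw [integral_Ico_eq_integral_Ioo, ← integral_Ioc_eq_integral_Ioo,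
    ← intervalIntegral.integral_of_le hab, integral_id]

lemma haarCoeff_prod_eq_prod_integral (d : ℕ) (g : Fin d → ℝ → ℝ) (j : Fin d → ℤ) (m : Fin d → ℕ) :
    haarCoeff d (fun x => ∏ i, g i (x i)) j m
      = ∏ i, ∫ t in Set.Icc (0:ℝ) 1, g i t * haar1 (j i) (m i) t := by
  simp only [haarCoeff, haarFn, unitCube, ← Finset.prod_mul_distrib]
  rw [volume_pi, Measure.restrict_pi_pi]
  exact integral_fintype_prod_eq_prod fun i t => g i t * haar1 (j i) (m i) t

lemma integral_id_mul_haar1_neg_one (m : ℕ) :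
    ∫ x in Set.Icc (0:ℝ) 1, x * haar1 (-1) m x = 1 / 2 := by
  have h : Set.EqOn (fun x : ℝ => x * haar1 (-1) m x) id (Set.Ico 0 1) := fun x hx => by
    simp [haar1, hx.1, hx.2]
  rw [integral_Icc_eq_integral_Ico, setIntegral_congr_fun measurableSet_Ico h]
  simpa using setIntegral_Ico_id zero_le_one

lemma mul_haar1_of_ne {j : ℤ} (hj : j ≠ -1) (m : ℕ) (f : ℝ → ℝ) (x : ℝ) :
    f x * haar1 j m x
      = (Set.Ico ((m : ℝ) / 2 ^ j.toNat) ((m + 1 / 2) / 2 ^ j.toNat)).indicator f x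
        - (Set.Ico (((m : ℝ) + 1 / 2) / 2 ^ j.toNat) ((m + 1) / 2 ^ j.toNat)).indicator f x := by
  simp only [haar1, if_neg hj, Set.indicator_apply, Set.mem_Ico]
  split_ifs <;> grind

lemma integral_id_mul_haar1_of_ne {j : ℤ} (hj : j ≠ -1) {m : ℕ} (hm : m < 2 ^ j.toNat) :
    ∫ x in Set.Icc (0:ℝ) 1, x * haar1 j m x = -((2:ℝ) ^ (2 * j.toNat))⁻¹ / 4 := by
  have hN : (0 : ℝ) < 2 ^ j.toNat := by positivity
  have hmN : (m : ℝ) + 1 ≤ 2 ^ j.toNat := by exact_mod_cast hm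
  have hab : (m : ℝ) / 2 ^ j.toNat ≤ (m + 1 / 2) / 2 ^ j.toNat := by gcongr; linarith
  have hbc : ((m : ℝ) + 1 / 2) / 2 ^ j.toNat ≤ (m + 1) / 2 ^ j.toNat := by gcongr; linarith
  have ha : (0 : ℝ) ≤ m / 2 ^ j.toNat := by positivity
  have hc : ((m : ℝ) + 1) / 2 ^ j.toNat ≤ 1 := (div_le_one hN).2 hmN
  have hint {s t : ℝ} (h : Set.Ico s t ⊆ Set.Icc 0 1) :
      ∫ x in Set.Icc (0:ℝ) 1, (Set.Ico s t).indicator id x = ∫ x in Set.Ico s t, x := by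
    rw [setIntegral_indicator measurableSet_Ico, Set.inter_eq_right.2 h]
    rfl
  have hI (s t : ℝ) : Integrable ((Set.Ico s t).indicator id) :=
    ((continuous_id.integrableOn_Icc).mono_set Set.Ico_subset_Icc_self).integrable_indicator
      measurableSet_Ico
  rw [show (fun x => x * haar1 j m x) = _ from funext (mul_haar1_of_ne hj m id),
    integral_sub (hI _ _).integrableOn (hI _ _).integrableOn,
    hint (Set.Ico_subset_Icc_self.trans (Set.Icc_subset_Icc ha (hbc.trans hc))),
    hint (Set.Ico_subset_Icc_self.trans (Set.Icc_subset_Icc (ha.trans hab) hc)),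
    setIntegral_Ico_id hab, setIntegral_Ico_id hbc, pow_mul']
  field_simp
  ring

lemma abs_integral_id_mul_haar1 {j : ℤ} {m : ℕ} (hm : m < 2 ^ j.toNat) :
    |∫ x in Set.Icc (0:ℝ) 1, x * haar1 j m x|
      = (if j = -1 then 1 / 2 else 1 / 4) * ((2:ℝ) ^ (2 * j.toNat))⁻¹ := by
  split_ifs with hj
  · subst hj
    norm_num [integral_id_mul_haar1_neg_one, show (-1 : ℤ).toNat = 0 from rfl]
  · rw [integral_id_mul_haar1_of_ne hj hm, neg_div, abs_neg, abs_of_nonneg (by positivity)]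
    ring

theorem haar_coeff_volume_part_general (d : ℕ) :
    ∃ c C : ℝ, 0 < c ∧ 0 < C ∧
      ∀ (j : Fin d → ℤ), (∀ i, -1 ≤ j i) →
        ∀ (m : Fin d → ℕ), (∀ i, m i < 2 ^ (j i).toNat) →
          c * ((2:ℝ) ^ (2 * jnorm d j))⁻¹ ≤
              |haarCoeff d (fun x => ∏ i, x i) j m| ∧
            |haarCoeff d (fun x => ∏ i, x i) j m| ≤
              C * ((2:ℝ) ^ (2 * jnorm d j))⁻¹ := by
  refine ⟨(1 / 4) ^ d, 1, by positivity, one_pos, fun j _ m hm => ?_⟩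
  set w : Fin d → ℝ := fun i => if j i = -1 then 1 / 2 else 1 / 4
  have hw : ∀ i, 1 / 4 ≤ w i ∧ w i ≤ 1 := fun i => by
    simp only [w]; split_ifs <;> norm_num
  have hcoeff : |haarCoeff d (fun x => ∏ i, x i) j m|
      = (∏ i, w i) * ((2:ℝ) ^ (2 * jnorm d j))⁻¹ := by
    rw [haarCoeff_prod_eq_prod_integral d fun _ t => t, Finset.abs_prod]
    simp only [abs_integral_id_mul_haar1 (hm _), Finset.prod_mul_distrib,
      Finset.prod_inv_distrib, Finset.prod_pow_eq_pow_sum, jnorm, Finset.mul_sum, w]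
  have hlow : (1 / 4 : ℝ) ^ d ≤ ∏ i, w i := by
    have := Finset.prod_le_prod (s := Finset.univ) (fun _ _ => by norm_num) fun i _ => (hw i).1
    rwa [Finset.prod_const, Finset.card_univ, Fintype.card_fin] at this
  have hup : ∏ i, w i ≤ 1 :=
    Finset.prod_le_one (fun i _ => by linarith [(hw i).1]) (fun i _ => (hw i).2)
  rw [hcoeff]
  exact ⟨by gcongr, by gcongr⟩

/-- The Haar coefficients of `f(x) = x₁⋯x_d` satisfy
`|⟨f, h_{j,m}⟩| ≍_d 2^{-2|j|}`. -/
theorem haar_coeff_volume_part (d : ℕ) (hd : 0 < d) :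
    ∃ c C : ℝ, 0 < c ∧ 0 < C ∧
      ∀ (j : Fin d → ℤ), (∀ i, -1 ≤ j i) →
        ∀ (m : Fin d → ℕ), (∀ i, m i < 2 ^ (j i).toNat) →
          c * ((2:ℝ) ^ (2 * jnorm d j))⁻¹ ≤
              |haarCoeff d (fun x => ∏ i, x i) j m| ∧
            |haarCoeff d (fun x => ∏ i, x i) j m| ≤
              C * ((2:ℝ) ^ (2 * jnorm d j))⁻¹ :=
  haar_coeff_volume_part_general d
end
end

section
/- Let 0 < α < β < ∞ and let f ∈ L_∞([0,1)^d) with ‖f | exp(L^α)‖ < ∞. Then ‖f | exp(L^β)‖ < ∞ and ‖f | exp(L^β)‖ ≤ C · ‖f | exp(L^α)‖^{α/β} · ‖f‖_{L_∞([0,1)^d)}^{1−α/β}, where C > 0 depends only on α, β and the fixed choices of Young functions. -/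
open MeasureTheory
open scoped ENNReal

noncomputable section

/-! Let `|f| ≤ M` a.e. and `∫ ψa (|f|/A) ≤ 1`, and put `K = A^{α/β} M^{1-α/β}`. Then
`(|f|/K)^β ≤ (|f|/A)^α` pointwise, and since a Young function of exponential type differs from
`exp (x^γ) - 1` by a bounded amount on `[0, ∞)`, this gives `ψb (|f|/K) ≤ ψa (|f|/A) + C`.
Integrating over the unit cube, a probability space, yields `∫ ψb (|f|/K) ≤ 1 + C`, and
convexity of `ψb` with `ψb 0 = 0` turns this into `‖f‖_{ψb} ≤ (1 + C) K`. Take `M = ‖f‖_∞` and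
the infimum over admissible `A`. -/

namespace IsYoungExp

variable {γ : ℝ} {ψ : ℝ → ℝ}

lemma nonneg (h : IsYoungExp γ ψ) {x : ℝ} (hx : 0 ≤ x) : 0 ≤ ψ x := by
  rcases hx.eq_or_lt with rfl | hx
  · exact h.2.1.ge
  · exact (h.2.2.1 x hx).le

lemma map_mul_le (h : IsYoungExp γ ψ) {t x : ℝ} (ht0 : 0 ≤ t) (ht1 : t ≤ 1) (hx : 0 ≤ x) :
    ψ (t * x) ≤ t * ψ x := by
  simpa [h.2.1] using
    h.1.2 Set.self_mem_Ici (Set.mem_Ici.2 hx) (sub_nonneg.2 ht1) ht0 (sub_add_cancel 1 t)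

lemma monotoneOn (h : IsYoungExp γ ψ) : MonotoneOn ψ (Set.Ici 0) := by
  intro x hx y hy hxy
  rcases (Set.mem_Ici.1 hy).eq_or_lt with rfl | hy
  · rw [le_antisymm hxy hx]
  have hxy' : x / y ≤ 1 := (div_le_one hy).2 hxy
  calc ψ x = ψ (x / y * y) := by rw [div_mul_cancel₀ x hy.ne']
    _ ≤ x / y * ψ y := h.map_mul_le (div_nonneg hx hy.le) hxy' hy.le
    _ ≤ ψ y := mul_le_of_le_one_left (h.nonneg hy.le) hxy'

lemma integrable_comp (h : IsYoungExp γ ψ) {X : Type*} [MeasurableSpace X] {μ : Measure X}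
    [IsFiniteMeasure μ] {g : X → ℝ} (hg : AEMeasurable g μ) (hg0 : ∀ x, 0 ≤ g x) {M : ℝ}
    (hgM : ∀ᵐ x ∂μ, g x ≤ M) : Integrable (fun x => ψ (g x)) μ := by
  have hmono : Monotone fun y => ψ (max y 0) := fun y z hyz =>
    h.monotoneOn (le_max_right y 0) (le_max_right z 0) (max_le_max hyz le_rfl)
  have hmeas : AEStronglyMeasurable (fun x => ψ (g x)) μ :=
    (hmono.measurable.comp_aemeasurable hg).aestronglyMeasurable.congr
      (.of_forall fun x => by simp only [Function.comp_apply, max_eq_left (hg0 x)])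
  refine (integrable_const (ψ (max M 0))).mono' hmeas ?_
  filter_upwards [hgM] with x hx
  rw [Real.norm_eq_abs, abs_of_nonneg (h.nonneg (hg0 x))]
  exact h.monotoneOn (hg0 x) (le_max_right M 0) (hx.trans (le_max_left M 0))

lemma integrable_comp_abs_div (h : IsYoungExp γ ψ) {X : Type*} [MeasurableSpace X]
    {μ : Measure X} [IsFiniteMeasure μ] {f : X → ℝ} (hf : AEMeasurable f μ) {M : ℝ}
    (hfM : ∀ᵐ x ∂μ, |f x| ≤ M) {K : ℝ} (hK : 0 < K) :
    Integrable (fun x => ψ (|f x| / K)) μ :=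
  h.integrable_comp ((measurable_abs.comp_aemeasurable hf).div_const K)
    (fun x => by positivity) (M := M / K) (by filter_upwards [hfM] with x hx; gcongr)

lemma exists_abs_sub_exp_rpow_le (h : IsYoungExp γ ψ) (hγ : 0 ≤ γ) :
    ∃ C, ∀ x, 0 ≤ x → |ψ x - (Real.exp (x ^ γ) - 1)| ≤ C := by
  obtain ⟨x₀, hx₀⟩ := h.2.2.2
  set R := max x₀ 0
  have hR : 0 ≤ R := le_max_right _ _
  refine ⟨ψ R + (Real.exp (R ^ γ) - 1), fun x hx => ?_⟩
  have hψR : 0 ≤ ψ R := h.nonneg hR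
  have hexpR : 1 ≤ Real.exp (R ^ γ) := Real.one_le_exp (Real.rpow_nonneg hR γ)
  rcases le_or_gt R x with hRx | hxR
  · rw [hx₀ x ((le_max_left _ _).trans hRx), sub_self, abs_zero]
    linarith
  have hψx : 0 ≤ ψ x := h.nonneg hx
  have hψxR : ψ x ≤ ψ R := h.monotoneOn hx hR hxR.le
  have hexpx : 1 ≤ Real.exp (x ^ γ) := Real.one_le_exp (Real.rpow_nonneg hx γ)
  have hexpxR : Real.exp (x ^ γ) ≤ Real.exp (R ^ γ) :=
    Real.exp_le_exp.2 (Real.rpow_le_rpow hx hxR.le hγ)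
  rw [abs_le]
  constructor <;> linarith

lemma exists_le_add_of_rpow_le {α β : ℝ} {ψa ψb : ℝ → ℝ} (ha : IsYoungExp α ψa)
    (hb : IsYoungExp β ψb) (hα : 0 ≤ α) (hβ : 0 ≤ β) :
    ∃ C, 0 ≤ C ∧ ∀ s t, 0 ≤ s → 0 ≤ t → s ^ β ≤ t ^ α → ψb s ≤ ψa t + C := by
  obtain ⟨Ca, hCa⟩ := ha.exists_abs_sub_exp_rpow_le hα
  obtain ⟨Cb, hCb⟩ := hb.exists_abs_sub_exp_rpow_le hβ
  refine ⟨Ca + Cb, ?_, fun s t hs ht hst => ?_⟩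
  · linarith [(abs_nonneg _).trans (hCa 0 le_rfl), (abs_nonneg _).trans (hCb 0 le_rfl)]
  · linarith [Real.exp_le_exp.2 hst, (abs_le.1 (hCa t ht)).1, (abs_le.1 (hCb s hs)).2]

end IsYoungExp

lemma div_rpow_mul_rpow_rpow_le {α β u A M : ℝ} (hβ : 0 < β) (hαβ : α ≤ β) (hu : 0 ≤ u)
    (huM : u ≤ M) (hA : 0 < A) : (u / (A ^ (α / β) * M ^ (1 - α / β))) ^ β ≤ (u / A) ^ α := by
  rcases hu.eq_or_lt with rfl | hu
  · rw [zero_div, Real.zero_rpow hβ.ne', zero_div]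
    exact Real.rpow_nonneg le_rfl α
  have hM : 0 < M := hu.trans_le huM
  have hK : (A ^ (α / β) * M ^ (1 - α / β)) ^ β = A ^ α * M ^ (β - α) := by
    rw [Real.mul_rpow (by positivity) (by positivity), ← Real.rpow_mul hA.le,
      ← Real.rpow_mul hM.le]
    congr 2 <;> field_simp
  have hsplit : u ^ β = u ^ α * u ^ (β - α) := by
    rw [← Real.rpow_add hu, add_sub_cancel]
  rw [Real.div_rpow hu.le (by positivity), hK, Real.div_rpow hu.le hA.le,
    div_le_div_iff₀ (by positivity) (by positivity), hsplit]
  calc u ^ α * u ^ (β - α) * A ^ α ≤ u ^ α * M ^ (β - α) * A ^ α := by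
        gcongr
    _ = u ^ α * (A ^ α * M ^ (β - α)) := by ring

lemma ae_abs_le_toReal_eLpNorm_top {X : Type*} [MeasurableSpace X] {μ : Measure X}
    {f : X → ℝ} (hf : eLpNorm f ⊤ μ ≠ ⊤) : ∀ᵐ x ∂μ, |f x| ≤ (eLpNorm f ⊤ μ).toReal := by
  filter_upwards [ae_le_eLpNormEssSup (f := f) (μ := μ)] with x hx
  rw [← eLpNorm_exponent_top] at hx
  simpa [Real.norm_eq_abs] using ENNReal.toReal_mono hf hx

lemma volume_unitCubeIco (d : ℕ) : volume (unitCubeIco d) = 1 := by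
  simp [unitCubeIco, volume_pi_pi, Real.volume_Ico]

instance isProbabilityMeasure_restrict_unitCubeIco (d : ℕ) :
    IsProbabilityMeasure (volume.restrict (unitCubeIco d)) :=
  ⟨by rw [Measure.restrict_apply_univ, volume_unitCubeIco]⟩

section Orlicz

variable {d : ℕ} {ψ : ℝ → ℝ} {f : (Fin d → ℝ) → ℝ}

lemma orliczNorm_le_ofReal {K : ℝ} (hK : 0 < K)
    (h : ∫ x in unitCubeIco d, ψ (|f x| / K) ≤ 1) : orliczNorm d ψ f ≤ ENNReal.ofReal K :=
  iInf_le (fun K : {K : ℝ // 0 < K ∧ ∫ x in unitCubeIco d, ψ (|f x| / K) ≤ 1} =>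
    ENNReal.ofReal K.1) ⟨K, hK, h⟩

lemma orliczNorm_eq_zero_of_ae_eq_zero (hψ : ψ 0 = 0)
    (hf : f =ᵐ[volume.restrict (unitCubeIco d)] 0) : orliczNorm d ψ f = 0 := by
  refine le_antisymm (ENNReal.le_of_forall_pos_le_add fun ε hε _ => ?_) bot_le
  rw [zero_add, ← ENNReal.ofReal_coe_nnreal]
  refine orliczNorm_le_ofReal hε (le_of_eq_of_le (integral_eq_zero_of_ae ?_) zero_le_one)
  filter_upwards [hf] with x hx
  simp [hx, hψ]

lemma orliczNorm_le_ofReal_mul {γ : ℝ} (hψ : IsYoungExp γ ψ) {B K : ℝ} (hB : 1 ≤ B)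
    (hK : 0 < K) (hi : Integrable (fun x => ψ (|f x| / K)) (volume.restrict (unitCubeIco d)))
    (h : ∫ x in unitCubeIco d, ψ (|f x| / K) ≤ B) :
    orliczNorm d ψ f ≤ ENNReal.ofReal (B * K) := by
  have hB0 : 0 < B := zero_lt_one.trans_le hB
  refine orliczNorm_le_ofReal (by positivity) ?_
  calc ∫ x in unitCubeIco d, ψ (|f x| / (B * K))
      ≤ ∫ x in unitCubeIco d, B⁻¹ * ψ (|f x| / K) := by
        refine integral_mono_of_nonneg (.of_forall fun x => hψ.nonneg (by positivity))
          (hi.const_mul _) (.of_forall fun x => ?_)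
        dsimp only
        rw [show |f x| / (B * K) = B⁻¹ * (|f x| / K) by ring]
        exact hψ.map_mul_le (by positivity) (inv_le_one_of_one_le₀ hB) (by positivity)
    _ = B⁻¹ * ∫ x in unitCubeIco d, ψ (|f x| / K) := integral_const_mul _ _
    _ ≤ B⁻¹ * B := by gcongr
    _ = 1 := inv_mul_cancel₀ hB0.ne'

variable {α β C : ℝ} {ψa ψb : ℝ → ℝ}

lemma orliczNorm_le_ofReal_mul_rpow_mul_rpow (ha : IsYoungExp α ψa) (hb : IsYoungExp β ψb)
    (hβ : 0 < β) (hαβ : α ≤ β) (hC0 : 0 ≤ C)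
    (hC : ∀ s t, 0 ≤ s → 0 ≤ t → s ^ β ≤ t ^ α → ψb s ≤ ψa t + C)
    (hf : AEMeasurable f (volume.restrict (unitCubeIco d))) {M : ℝ} (hM : 0 < M)
    (hfM : ∀ᵐ x ∂volume.restrict (unitCubeIco d), |f x| ≤ M) {A : ℝ} (hA : 0 < A)
    (hfA : ∫ x in unitCubeIco d, ψa (|f x| / A) ≤ 1) :
    orliczNorm d ψb f ≤ ENNReal.ofReal ((1 + C) * (A ^ (α / β) * M ^ (1 - α / β))) := by
  set K := A ^ (α / β) * M ^ (1 - α / β)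
  have hK : 0 < K := by positivity
  have hia := ha.integrable_comp_abs_div hf hfM hA
  have hib := hb.integrable_comp_abs_div hf hfM hK
  have hdom : ∀ᵐ x ∂volume.restrict (unitCubeIco d), ψb (|f x| / K) ≤ ψa (|f x| / A) + C := by
    filter_upwards [hfM] with x hx
    exact hC _ _ (by positivity) (by positivity)
      (div_rpow_mul_rpow_rpow_le hβ hαβ (abs_nonneg _) hx hA)
  refine orliczNorm_le_ofReal_mul hb (by linarith) hK hib ?_
  calc ∫ x in unitCubeIco d, ψb (|f x| / K)
      ≤ ∫ x in unitCubeIco d, (ψa (|f x| / A) + C) :=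
        integral_mono_ae hib (hia.add (integrable_const C)) hdom
    _ = (∫ x in unitCubeIco d, ψa (|f x| / A)) + C := by
        rw [integral_add hia (integrable_const C), integral_const, probReal_univ, one_smul]
    _ ≤ 1 + C := by linarith

theorem orliczNorm_le_ofReal_mul_orliczNorm_rpow_mul_eLpNorm_rpow (ha : IsYoungExp α ψa)
    (hb : IsYoungExp β ψb) (hα : 0 < α) (hαβ : α ≤ β) (hC0 : 0 ≤ C)
    (hC : ∀ s t, 0 ≤ s → 0 ≤ t → s ^ β ≤ t ^ α → ψb s ≤ ψa t + C)
    (hf : MemLp f ⊤ (volume.restrict (unitCubeIco d))) (hfa : orliczNorm d ψa f ≠ ⊤) :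
    orliczNorm d ψb f ≤ ENNReal.ofReal (1 + C) * orliczNorm d ψa f ^ (α / β) *
      eLpNorm f ⊤ (volume.restrict (unitCubeIco d)) ^ (1 - α / β) := by
  set E := eLpNorm f ⊤ (volume.restrict (unitCubeIco d))
  by_cases hE : E = 0
  · rw [orliczNorm_eq_zero_of_ae_eq_zero hb.2.1 ((eLpNorm_eq_zero_iff hf.1 (by simp)).1 hE)]
    exact bot_le
  have hβ : 0 < β := hα.trans_le hαβ
  have hθ : 0 < α / β := div_pos hα hβ
  have hM : 0 < E.toReal := ENNReal.toReal_pos hE hf.eLpNorm_ne_top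
  have hfM := ae_abs_le_toReal_eLpNorm_top hf.eLpNorm_ne_top
  have : Nonempty {K : ℝ // 0 < K ∧ ∫ x in unitCubeIco d, ψa (|f x| / K) ≤ 1} := by
    by_contra hne
    have := not_nonempty_iff.1 hne
    exact hfa (iInf_of_empty _)
  have hEθ : E ^ (1 - α / β) ≠ ⊤ :=
    ENNReal.rpow_ne_top_of_nonneg (sub_nonneg.2 ((div_le_one hβ).2 hαβ)) hf.eLpNorm_ne_top
  calc orliczNorm d ψb f
      ≤ ⨅ A : {K : ℝ // 0 < K ∧ ∫ x in unitCubeIco d, ψa (|f x| / K) ≤ 1},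
          ENNReal.ofReal (1 + C) * ENNReal.ofReal A.1 ^ (α / β) * E ^ (1 - α / β) := by
        refine le_iInf fun A => (orliczNorm_le_ofReal_mul_rpow_mul_rpow ha hb hβ hαβ hC0 hC
          hf.1.aemeasurable hM hfM A.2.1 A.2.2).trans_eq ?_
        rw [ENNReal.ofReal_mul (by linarith), ENNReal.ofReal_mul (Real.rpow_pos_of_pos A.2.1 _).le,
          ← ENNReal.ofReal_rpow_of_pos A.2.1, ← ENNReal.ofReal_rpow_of_pos hM,
          ENNReal.ofReal_toReal hf.eLpNorm_ne_top, mul_assoc]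
    _ = ENNReal.ofReal (1 + C) * orliczNorm d ψa f ^ (α / β) * E ^ (1 - α / β) := by
        rw [← ENNReal.iInf_mul' (fun h => absurd h hEθ) (fun _ => inferInstance),
          ← ENNReal.mul_iInf' (fun h => absurd h ENNReal.ofReal_ne_top) (fun _ => inferInstance)]
        exact congrArg (fun x => ENNReal.ofReal (1 + C) * x * E ^ (1 - α / β))
          ((ENNReal.orderIsoRpow _ hθ).map_iInf
            fun A : {K : ℝ // 0 < K ∧ ∫ x in unitCubeIco d, ψa (|f x| / K) ≤ 1} =>
              ENNReal.ofReal A.1).symm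

end Orlicz

theorem exp_orlicz_interpolation_general (d : ℕ) (α β : ℝ) (h0 : 0 < α)
    (hαβ : α < β) (ψa ψb : ℝ → ℝ) (ha : IsYoungExp α ψa) (hb : IsYoungExp β ψb) :
    ∃ C : ℝ, 0 < C ∧ ∀ f : (Fin d → ℝ) → ℝ,
      MemLp f ⊤ (volume.restrict (unitCubeIco d)) →
      orliczNorm d ψa f ≠ ⊤ →
      orliczNorm d ψb f ≠ ⊤ ∧
        orliczNorm d ψb f ≤ ENNReal.ofReal C * (orliczNorm d ψa f) ^ (α/β) *
          (eLpNorm f ⊤ (volume.restrict (unitCubeIco d))) ^ (1 - α/β) := by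
  have hβ : 0 < β := h0.trans hαβ
  obtain ⟨C, hC0, hC⟩ := ha.exists_le_add_of_rpow_le hb h0.le hβ.le
  refine ⟨1 + C, by linarith, fun f hf hfa => ?_⟩
  have hle := orliczNorm_le_ofReal_mul_orliczNorm_rpow_mul_eLpNorm_rpow ha hb h0 hαβ.le hC0 hC
    hf hfa
  have hθ1 : 0 ≤ 1 - α / β := sub_nonneg.2 ((div_le_one hβ).2 hαβ.le)
  refine ⟨ne_top_of_le_ne_top ?_ hle, hle⟩
  exact ENNReal.mul_ne_top (ENNReal.mul_ne_top ENNReal.ofReal_ne_top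
    (ENNReal.rpow_ne_top_of_nonneg (div_pos h0 hβ).le hfa))
    (ENNReal.rpow_ne_top_of_nonneg hθ1 hf.eLpNorm_ne_top)

/-- Interpolation between exponential Orlicz norms and `L_∞`:
for `0 < α < β`, `‖f | exp(L^β)‖ ≤ C ‖f | exp(L^α)‖^{α/β} ‖f‖_∞^{1-α/β}`. -/
theorem exp_orlicz_interpolation (d : ℕ) (hd : 0 < d) (α β : ℝ) (h0 : 0 < α)
    (hαβ : α < β) (ψa ψb : ℝ → ℝ) (ha : IsYoungExp α ψa) (hb : IsYoungExp β ψb) :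
    ∃ C : ℝ, 0 < C ∧ ∀ f : (Fin d → ℝ) → ℝ,
      MemLp f ⊤ (volume.restrict (unitCubeIco d)) →
      orliczNorm d ψa f ≠ ⊤ →
      orliczNorm d ψb f ≠ ⊤ ∧
        orliczNorm d ψb f ≤ ENNReal.ofReal C * (orliczNorm d ψa f) ^ (α/β) *
          (eLpNorm f ⊤ (volume.restrict (unitCubeIco d))) ^ (1 - α/β) :=
  exp_orlicz_interpolation_general d α β h0 hαβ ψa ψb ha hb

end
end
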